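/- arXiv:hep-th/0311215 — 5 statements merged into one kernel-verified Lean document; each statement's English description precedes it below -/
import Mathlib

section
/- If (k₀, k₁, …, kₙ; μ₀, μ₁, …, μₙ) is a set of U(n) caloron boundary data (i.e. it satisfies conditions (i)–(iv)), then its image (k̃₀, …, k̃ₙ; μ₀, μ̃₁, …, μ̃ₙ) under the rotation map ρ is again a set of U(n) caloron boundary data; that is, it satisfies (i) k̃₁ + ⋯ + k̃ₙ = 0, (ii) μ̃ₙ < μ̃ₙ₋₁ < ⋯ < μ̃₁, (iii) μ₀ − (μ̃₁ − μ̃ₙ) > 0, and (iv) k̃₀ + k̃₁ + ⋯ + k̃_p ≥ 0 for every p = 0, 1, …, n. -/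
open Finset

/-- The rotated charges: `k̃₀ = k₀ + k₁`, `k̃ⱼ = k_{j+1}` for `1 ≤ j ≤ n-1`, `k̃ₙ = k₁`. -/
def rotK (n : ℕ) (k : ℕ → ℤ) : ℕ → ℤ :=
  fun j => if j = 0 then k 0 + k 1 else if j = n then k 1 else k (j + 1)

/-- The rotated masses: `μ̃ⱼ = μ₀/n + μ_{j+1}` for `1 ≤ j ≤ n-1`, `μ̃ₙ = μ₁ - (n-1)μ₀/n`;
`μ₀` is unchanged. -/
noncomputable def rotMu (n : ℕ) (μ₀ : ℝ) (μ : ℕ → ℝ) : ℕ → ℝ :=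
  fun j => if j = n then μ 1 - ((n : ℝ) - 1) * μ₀ / n else μ₀ / n + μ (j + 1)

/-!
The rotation shifts the `n` mass gaps `μ₁ - μ₂, …, μₙ₋₁ - μₙ, μ₀ - (μ₁ - μₙ)` cyclically by one
place, so they all stay positive, which is (ii) and (iii) together. On the charges, the partial
sums `k̃₀ + ⋯ + k̃ₚ` for `p < n` are the partial sums `k₀ + ⋯ + kₚ₊₁`, and the total charge
`k̃₁ + ⋯ + k̃ₙ` equals `k₁ + ⋯ + kₙ`; this gives (i) and (iv).
-/

theorem Finset.sum_Icc_zero_eq_add_sum_Icc_one {M : Type*} [AddCommMonoid M] (f : ℕ → M) (n : ℕ) :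
    ∑ j ∈ Icc 0 n, f j = f 0 + ∑ j ∈ Icc 1 n, f j := by
  rw [Icc_eq_cons_Ioc n.zero_le, sum_cons, ← Icc_add_one_left_eq_Ioc, zero_add]

section Charges

variable {n : ℕ} (k : ℕ → ℤ)

theorem rotK_zero : rotK n k 0 = k 0 + k 1 := rfl

theorem rotK_self (hn : n ≠ 0) : rotK n k n = k 1 := by
  simp [rotK, hn]

theorem rotK_of_ne {j : ℕ} (hj : j ≠ 0) (hjn : j ≠ n) : rotK n k j = k (j + 1) := by
  simp [rotK, hj, hjn]

theorem sum_Icc_zero_rotK {p : ℕ} (hp : p < n) :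
    ∑ j ∈ Icc 0 p, rotK n k j = ∑ j ∈ Icc 0 (p + 1), k j := by
  induction p with
  | zero => simp [sum_Icc_succ_top, rotK_zero]
  | succ p ih =>
    rw [sum_Icc_succ_top (by omega), ih (by omega), rotK_of_ne k (by omega) (by omega),
      sum_Icc_succ_top (a := 0) (b := p + 1) (by omega)]

theorem sum_Icc_one_rotK (hn : n ≠ 0) :
    ∑ j ∈ Icc 1 n, rotK n k j = ∑ j ∈ Icc 1 n, k j := by
  obtain ⟨m, rfl⟩ := Nat.exists_eq_succ_of_ne_zero hn
  have htotal : ∑ j ∈ Icc 0 (m + 1), rotK (m + 1) k j = ∑ j ∈ Icc 0 (m + 1), k j + k 1 := by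
    rw [sum_Icc_succ_top (by omega), sum_Icc_zero_rotK k (Nat.lt_succ_self m), rotK_self k hn]
  rw [sum_Icc_zero_eq_add_sum_Icc_one, sum_Icc_zero_eq_add_sum_Icc_one k, rotK_zero] at htotal
  linarith

end Charges

section Masses

variable {n : ℕ} (μ₀ : ℝ) (μ : ℕ → ℝ)

theorem rotMu_self (hn : n ≠ 0) : rotMu n μ₀ μ n = μ 1 - μ₀ + μ₀ / n := by
  rw [rotMu, if_pos rfl]
  field_simp
  ring

theorem rotMu_of_ne {j : ℕ} (hjn : j ≠ n) : rotMu n μ₀ μ j = μ₀ / n + μ (j + 1) := by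
  simp [rotMu, hjn]

theorem rotMu_sub_rotMu_succ {j : ℕ} (hj : j + 1 < n) :
    rotMu n μ₀ μ j - rotMu n μ₀ μ (j + 1) = μ (j + 1) - μ (j + 2) := by
  rw [rotMu_of_ne μ₀ μ (by omega), rotMu_of_ne μ₀ μ (by omega)]
  ring

theorem rotMu_sub_rotMu_self {j : ℕ} (hj : j + 1 = n) :
    rotMu n μ₀ μ j - rotMu n μ₀ μ n = μ₀ - (μ 1 - μ n) := by
  rw [rotMu_of_ne μ₀ μ (by omega), rotMu_self μ₀ μ (by omega), hj]
  ring

theorem sub_rotMu_one_sub_rotMu_self (hn : 1 < n) :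
    μ₀ - (rotMu n μ₀ μ 1 - rotMu n μ₀ μ n) = μ 1 - μ 2 := by
  rw [rotMu_of_ne μ₀ μ hn.ne, rotMu_self μ₀ μ (by omega)]
  ring

end Masses

/-- If `(k₀,…,kₙ; μ₀,…,μₙ)` is a set of `U(n)` caloron boundary data then so is its image
under the rotation map. -/
theorem rotation_preserves_caloron_boundary_data
    (n : ℕ) (hn : 2 ≤ n) (k : ℕ → ℤ) (μ₀ : ℝ) (μ : ℕ → ℝ)
    (h1 : ∑ j ∈ Icc 1 n, k j = 0)
    (h2 : ∀ j, 1 ≤ j → j < n → μ (j + 1) < μ j)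
    (h3 : 0 < μ₀ - (μ 1 - μ n))
    (h4 : ∀ p, p ≤ n → 0 ≤ ∑ j ∈ Icc 0 p, k j) :
    (∑ j ∈ Icc 1 n, rotK n k j = 0) ∧
    (∀ j, 1 ≤ j → j < n → rotMu n μ₀ μ (j + 1) < rotMu n μ₀ μ j) ∧
    (0 < μ₀ - (rotMu n μ₀ μ 1 - rotMu n μ₀ μ n)) ∧
    (∀ p, p ≤ n → 0 ≤ ∑ j ∈ Icc 0 p, rotK n k j) := by
  have hn0 : n ≠ 0 := by omega
  have hcharge : ∑ j ∈ Icc 1 n, rotK n k j = 0 := (sum_Icc_one_rotK k hn0).trans h1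
  refine ⟨hcharge, fun j hj hjn => ?_, ?_, fun p hp => ?_⟩
  · rcases (by omega : j + 1 < n ∨ j + 1 = n) with hlt | heq
    · linarith [rotMu_sub_rotMu_succ μ₀ μ hlt, h2 (j + 1) (by omega) hlt]
    · have hgap := rotMu_sub_rotMu_self μ₀ μ heq
      subst heq
      linarith
  · linarith [sub_rotMu_one_sub_rotMu_self μ₀ μ hn, h2 1 le_rfl hn]
  · rcases hp.lt_or_eq with hlt | rfl
    · rw [sum_Icc_zero_rotK k hlt]
      exact h4 _ hlt
    · have hfirst := sum_Icc_zero_rotK k (by omega : 0 < p)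
      rw [Icc_self, sum_singleton] at hfirst
      rw [sum_Icc_zero_eq_add_sum_Icc_one, hcharge, add_zero, hfirst]
      exact h4 1 (by omega)
end

section
/- Let n ≥ 2, let k₀, k₁, …, kₙ ∈ ℤ satisfy k₁ + ⋯ + kₙ = 0, and let μ₀, μ₁, …, μₙ ∈ ℝ be arbitrary. Then the n-fold application of the rotation map ρ to the tuple (k₀, k₁, …, kₙ; μ₀, μ₁, …, μₙ) returns the original tuple; that is, ρⁿ is the identity on such tuples. -/
open Finset

/-- The rotation map on tuples `(k₀,…,kₙ; μ₁,…,μₙ)` (with `μ₀` a fixed parameter). -/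
noncomputable def rot (n : ℕ) (μ₀ : ℝ) (p : (ℕ → ℤ) × (ℕ → ℝ)) : (ℕ → ℤ) × (ℕ → ℝ) :=
  (rotK n p.1, rotMu n μ₀ p.2)

/-!
The rotation shifts the indices `1, …, n` cyclically by one, adds the charge `k₁` it moves
past index `0` to `k₀`, and adds `μ₀ / n` to every mass, except that the mass wrapping around
from index `1` to index `n` also loses `μ₀`. After `n` steps every index has come back after
exactly one wrap-around, so the masses have gained `μ₀` and lost `μ₀`, while `k₀` has gained
`k₁ + ⋯ + kₙ = 0`.
-/

lemma rot_eq_prodMap (n : ℕ) (μ₀ : ℝ) : rot n μ₀ = Prod.map (rotK n) (rotMu n μ₀) := rfl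

lemma rotK_iterate_succ {n : ℕ} (k : ℕ → ℤ) (m : ℕ) {j : ℕ} (hj : j < n) :
    (rotK n)^[m] k (j + 1) = k ((j + m) % n + 1) := by
  induction m generalizing j with
  | zero => simp [Nat.mod_eq_of_lt hj]
  | succ m ih =>
    rw [Function.iterate_succ_apply', rotK, if_neg (Nat.succ_ne_zero j)]
    split_ifs with hjn
    · rw [ih (Nat.zero_lt_of_lt hj), show j + (m + 1) = m + n by omega, Nat.add_mod_right,
        zero_add]
    · rw [ih (by omega), add_right_comm, add_assoc]

lemma rotK_iterate_zero {n : ℕ} (hn : 0 < n) (k : ℕ → ℤ) (m : ℕ) :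
    (rotK n)^[m] k 0 = k 0 + ∑ i ∈ range m, k (i % n + 1) := by
  induction m with
  | zero => simp
  | succ m ih =>
    rw [Function.iterate_succ_apply', rotK, if_pos rfl, ih, rotK_iterate_succ k m (j := 0) hn,
      sum_range_succ, add_assoc, zero_add]

lemma rotMu_iterate_succ {n : ℕ} (μ₀ : ℝ) (μ : ℕ → ℝ) (m : ℕ) {j : ℕ} (hj : j < n) :
    (rotMu n μ₀)^[m] μ (j + 1) =
      μ ((j + m) % n + 1) + m * μ₀ / n - ((j + m) / n : ℕ) * μ₀ := by
  have hn : (n : ℝ) ≠ 0 := Nat.cast_ne_zero.mpr (Nat.ne_zero_of_lt hj)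
  induction m generalizing j with
  | zero => simp [Nat.mod_eq_of_lt hj, Nat.div_eq_of_lt hj]
  | succ m ih =>
    rw [Function.iterate_succ_apply', rotMu]
    split_ifs with hjn
    · rw [ih (Nat.zero_lt_of_lt hj), show j + (m + 1) = m + n by omega, Nat.add_mod_right,
        Nat.add_div_right _ (by omega), zero_add]
      push_cast
      field_simp
      ring
    · rw [ih (by omega), add_right_comm j 1 m, add_assoc]
      push_cast
      ring

theorem rotation_pow_n_eq_id_general
    (n : ℕ) (k : ℕ → ℤ) (μ₀ : ℝ) (μ : ℕ → ℝ)
    (h1 : ∑ j ∈ Icc 1 n, k j = 0) :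
    (∀ j, j ≤ n → ((rot n μ₀)^[n] (k, μ)).1 j = k j) ∧
    (∀ j, 1 ≤ j → j ≤ n → ((rot n μ₀)^[n] (k, μ)).2 j = μ j) := by
  rcases Nat.eq_zero_or_pos n with rfl | hn
  · exact ⟨fun j _ => rfl, fun j _ _ => rfl⟩
  simp only [rot_eq_prodMap, Prod.map_iterate, Prod.map_fst, Prod.map_snd]
  refine ⟨fun j hj => ?_, fun j hj₁ hj => ?_⟩
  · rcases j with _ | i
    · have hsum : ∑ i ∈ range n, k (i % n + 1) = ∑ j ∈ Icc 1 n, k j := by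
        rw [sum_congr rfl fun i hi => by rw [Nat.mod_eq_of_lt (mem_range.mp hi)], range_eq_Ico,
          sum_Ico_add', zero_add, Ico_add_one_right_eq_Icc]
      rw [rotK_iterate_zero hn, hsum, h1, add_zero]
    · rw [rotK_iterate_succ k n (by omega), Nat.add_mod_right, Nat.mod_eq_of_lt (by omega)]
  · obtain ⟨i, rfl⟩ := Nat.exists_eq_add_one_of_ne_zero (by omega : j ≠ 0)
    rw [rotMu_iterate_succ μ₀ μ n (by omega), Nat.add_mod_right, Nat.mod_eq_of_lt (by omega),
      Nat.add_div_right _ hn, Nat.div_eq_of_lt (by omega)]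
    field_simp
    ring

/-- If `k₁ + ⋯ + kₙ = 0` then the `n`-fold application of the rotation map returns the
original tuple `(k₀,…,kₙ; μ₀, μ₁,…,μₙ)`, i.e. `ρⁿ` is the identity on such tuples
(`μ₀` is unchanged by every rotation). -/
theorem rotation_pow_n_eq_id
    (n : ℕ) (hn : 2 ≤ n) (k : ℕ → ℤ) (μ₀ : ℝ) (μ : ℕ → ℝ)
    (h1 : ∑ j ∈ Icc 1 n, k j = 0) :
    (∀ j, j ≤ n → ((rot n μ₀)^[n] (k, μ)).1 j = k j) ∧
    (∀ j, 1 ≤ j → j ≤ n → ((rot n μ₀)^[n] (k, μ)).2 j = μ j) :=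
  rotation_pow_n_eq_id_general n k μ₀ μ h1
end

section
/- Let μ₀ > 0, let k ≥ 1 be an integer, and let λ₁, …, λ_k be pairwise distinct real numbers in the open interval (0, 2π/μ₀). For x = (x₀, x₁, x₂, x₃) ∈ ℝ⁴, the 2k × 2k complex matrix I − Hol(x) is singular (equivalently det(I − Hol(x)) = 0) if and only if x₁ = x₂ = x₃ = 0 and x₀ = λ_ℓ + 2πm/μ₀ for some ℓ ∈ {1, …, k} and some m ∈ ℤ (that is, if and only if x is a resonating point). -/
open Matrix Complex Kronecker

noncomputable section

/-- The spin matrices `γ₀, γ₁, γ₂, γ₃`. -/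
def γ0 : Matrix (Fin 2) (Fin 2) ℂ := !![1, 0; 0, 1]
def γ1 : Matrix (Fin 2) (Fin 2) ℂ := !![I, 0; 0, -I]
def γ2 : Matrix (Fin 2) (Fin 2) ℂ := !![0, -1; 1, 0]
def γ3 : Matrix (Fin 2) (Fin 2) ℂ := !![0, I; I, 0]

/-- `X(x) = x₀γ₀ + x₁γ₁ + x₂γ₂ + x₃γ₃`. -/
def Xmat (x₀ x₁ x₂ x₃ : ℝ) : Matrix (Fin 2) (Fin 2) ℂ :=
  (x₀ : ℂ) • γ0 + (x₁ : ℂ) • γ1 + (x₂ : ℂ) • γ2 + (x₃ : ℂ) • γ3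

/-- The holonomy `Hol(x) = exp( μ₀ ( i X(x) ⊗ I_k − I₂ ⊗ Λ ) )` of the instanton-block
Nahm operator, where `Λ = diag(iλ₁,…,iλ_k)`. -/
def Hol (μ₀ : ℝ) (k : ℕ) (lam : Fin k → ℝ) (x₀ x₁ x₂ x₃ : ℝ) :
    Matrix (Fin 2 × Fin k) (Fin 2 × Fin k) ℂ :=
  NormedSpace.exp
    ((μ₀ : ℂ) • (I • (Xmat x₀ x₁ x₂ x₃ ⊗ₖ (1 : Matrix (Fin k) (Fin k) ℂ)) -
      (1 : Matrix (Fin 2) (Fin 2) ℂ) ⊗ₖ Matrix.diagonal (fun ℓ => I * (lam ℓ : ℂ))))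

/-
The generator of `Hol` is block diagonal over `ℓ`, with blocks `iθ_ℓ · 1 + S`, where
`θ_ℓ = μ₀ (x₀ - λ_ℓ)` and `S = i μ₀ (x₁γ₁ + x₂γ₂ + x₃γ₃)` is Hermitian with
`det S = -μ₀² (x₁² + x₂² + x₃²)`. Diagonalising `S` by a unitary gives
`det (1 - exp (iθ + S)) = ∏ⱼ (1 - exp (iθ + sⱼ))` over the real eigenvalues `sⱼ` of `S`, and a
factor vanishes exactly when `sⱼ = 0` and `θ ∈ 2πℤ`. Finally some `sⱼ` vanishes iff `det S = 0`,
i.e. iff `x₁ = x₂ = x₃ = 0`.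
-/

open NormedSpace

-- `Pi.coe_exp` needs normed factors; the L∞ operator norm induces the usual topology on matrices.
theorem Matrix.exp_pi_apply {ι n 𝔸 : Type*} [Fintype ι] [Fintype n] [DecidableEq n]
    [NormedRing 𝔸] [NormedAlgebra ℚ 𝔸] [CompleteSpace 𝔸] (v : ι → Matrix n n 𝔸) (i : ι) :
    exp v i = exp (v i) :=
  let _ := Matrix.linftyOpNormedRing (n := n) (α := 𝔸)
  let _ := Matrix.linftyOpNormedAlgebra (R := ℚ) (n := n) (α := 𝔸)
  have : CompleteSpace (Matrix n n 𝔸) := inferInstanceAs (CompleteSpace (n → n → 𝔸))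
  @Pi.coe_exp ι (fun _ => Matrix n n 𝔸) _ _ _ (fun _ => this) v i

section

variable {ι n 𝔸 : Type*} [Fintype n] [DecidableEq n]
  [NormedCommRing 𝔸] [NormedAlgebra ℚ 𝔸] [CompleteSpace 𝔸]

theorem Matrix.det_one_sub_exp_blockDiagonal [Fintype ι] [DecidableEq ι]
    (v : ι → Matrix n n 𝔸) :
    det (1 - exp (blockDiagonal v)) = ∏ i, det (1 - exp (v i)) := by
  rw [exp_blockDiagonal, ← blockDiagonal_one, ← blockDiagonal_sub, det_blockDiagonal]
  simp only [Pi.sub_apply, Pi.one_apply, Matrix.exp_pi_apply]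

theorem Matrix.det_one_sub_exp_conj {U : Matrix n n 𝔸} (hU : IsUnit U) (A : Matrix n n 𝔸) :
    det (1 - exp (U * A * U⁻¹)) = det (1 - exp A) := by
  rw [exp_conj _ _ hU, ← det_conj hU (1 - exp A), Matrix.mul_sub, Matrix.sub_mul, mul_one,
    mul_nonsing_inv _ ((isUnit_iff_isUnit_det U).1 hU)]

theorem Matrix.det_one_sub_exp_diagonal (d : n → 𝔸) :
    det (1 - exp (diagonal d)) = ∏ i, (1 - exp (d i)) := by
  rw [exp_diagonal, ← diagonal_one, diagonal_sub, det_diagonal]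
  simp only [Pi.coe_exp]

end

theorem Matrix.IsHermitian.det_one_sub_exp_smul_one_add {𝕜 n : Type*} [RCLike 𝕜] [Fintype n]
    [DecidableEq n] {H : Matrix n n 𝕜} (hH : H.IsHermitian) (c : 𝕜) :
    det (1 - NormedSpace.exp (c • 1 + H)) =
      ∏ i, (1 - NormedSpace.exp (c + hH.eigenvalues i)) := by
  let u := hH.eigenvectorUnitary
  have hinv : (u : Matrix n n 𝕜)⁻¹ = star (u : Matrix n n 𝕜) :=
    inv_eq_left_inv (Unitary.coe_star_mul_self u)
  have hdiag : diagonal (fun i => c + (hH.eigenvalues i : 𝕜)) =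
      c • 1 + diagonal (RCLike.ofReal ∘ hH.eigenvalues) := by
    ext i j
    by_cases h : i = j <;> simp [h]
  have hconj : c • 1 + H =
      u * diagonal (fun i => c + (hH.eigenvalues i : 𝕜)) * (u : Matrix n n 𝕜)⁻¹ := by
    rw [hinv, hdiag, ← Unitary.conjStarAlgAut_apply (S := 𝕜), map_add, map_smul, map_one,
      ← hH.spectral_theorem]
  rw [hconj, det_one_sub_exp_conj Unitary.isUnit_coe, det_one_sub_exp_diagonal]

theorem Complex.exp_mul_I_add_ofReal_eq_one_iff (θ t : ℝ) :
    Complex.exp (θ * I + t) = 1 ↔ t = 0 ∧ ∃ m : ℤ, θ = 2 * Real.pi * m := by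
  rw [Complex.exp_eq_one_iff]
  constructor
  · rintro ⟨m, hm⟩
    have hre : t = 0 := by simpa using congrArg Complex.re hm
    have him : θ = m * (2 * Real.pi) := by simpa using congrArg Complex.im hm
    exact ⟨hre, m, by rw [him]; ring⟩
  · rintro ⟨rfl, m, rfl⟩
    exact ⟨m, by push_cast; ring⟩

theorem Matrix.IsHermitian.det_one_sub_exp_eq_zero_iff {n : Type*} [Fintype n] [DecidableEq n]
    {H : Matrix n n ℂ} (hH : H.IsHermitian) (θ : ℝ) :
    det (1 - NormedSpace.exp ((θ * I) • 1 + H)) = 0 ↔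
      H.det = 0 ∧ ∃ m : ℤ, θ = 2 * Real.pi * m := by
  simp only [hH.det_one_sub_exp_smul_one_add, hH.det_eq_prod_eigenvalues,
    Finset.prod_eq_zero_iff, Finset.mem_univ, true_and, sub_eq_zero, eq_comm (a := (1 : ℂ)),
    RCLike.ofReal_eq_complex_ofReal, ← Complex.exp_eq_exp_ℂ,
    Complex.exp_mul_I_add_ofReal_eq_one_iff, Complex.ofReal_eq_zero]
  exact ⟨fun ⟨i, hi, hθ⟩ => ⟨⟨i, hi⟩, hθ⟩, fun ⟨⟨i, hi⟩, hθ⟩ => ⟨i, hi, hθ⟩⟩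

def hermitianSpin (x₁ x₂ x₃ : ℝ) : Matrix (Fin 2) (Fin 2) ℂ :=
  I • ((x₁ : ℂ) • γ1 + (x₂ : ℂ) • γ2 + (x₃ : ℂ) • γ3)

theorem hermitianSpin_eq (x₁ x₂ x₃ : ℝ) :
    hermitianSpin x₁ x₂ x₃ = !![-(x₁ : ℂ), -x₃ - I * x₂; -x₃ + I * x₂, x₁] := by
  ext i j
  fin_cases i <;> fin_cases j <;> simp [hermitianSpin, γ1, γ2, γ3, Complex.ext_iff]

theorem isHermitian_hermitianSpin (x₁ x₂ x₃ : ℝ) : (hermitianSpin x₁ x₂ x₃).IsHermitian := by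
  rw [hermitianSpin_eq]
  ext i j
  fin_cases i <;> fin_cases j <;> simp [Complex.ext_iff]

theorem det_hermitianSpin (x₁ x₂ x₃ : ℝ) :
    (hermitianSpin x₁ x₂ x₃).det = -(x₁ ^ 2 + x₂ ^ 2 + x₃ ^ 2 : ℝ) := by
  rw [hermitianSpin_eq, det_fin_two_of]
  push_cast
  linear_combination (x₂ : ℂ) ^ 2 * I_sq

theorem det_hermitianSpin_eq_zero_iff (x₁ x₂ x₃ : ℝ) :
    (hermitianSpin x₁ x₂ x₃).det = 0 ↔ x₁ = 0 ∧ x₂ = 0 ∧ x₃ = 0 := by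
  rw [det_hermitianSpin, neg_eq_zero, Complex.ofReal_eq_zero]
  constructor
  · intro h
    refine ⟨?_, ?_, ?_⟩ <;> nlinarith [sq_nonneg x₁, sq_nonneg x₂, sq_nonneg x₃]
  · rintro ⟨rfl, rfl, rfl⟩
    norm_num

theorem hol_generator_eq_blockDiagonal (μ₀ : ℝ) (k : ℕ) (lam : Fin k → ℝ) (x₀ x₁ x₂ x₃ : ℝ) :
    (μ₀ : ℂ) • (I • (Xmat x₀ x₁ x₂ x₃ ⊗ₖ (1 : Matrix (Fin k) (Fin k) ℂ)) -
      (1 : Matrix (Fin 2) (Fin 2) ℂ) ⊗ₖ Matrix.diagonal (fun ℓ => I * (lam ℓ : ℂ))) =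
      blockDiagonal (fun ℓ => ((μ₀ * (x₀ - lam ℓ) : ℝ) * I) • 1 +
        hermitianSpin (μ₀ * x₁) (μ₀ * x₂) (μ₀ * x₃)) := by
  ext ⟨i, a⟩ ⟨j, b⟩
  by_cases hab : a = b <;>
    fin_cases i <;> fin_cases j <;>
    simp [blockDiagonal_apply, kroneckerMap_apply, one_apply, hab, hermitianSpin_eq, Xmat, γ0, γ1,
      γ2, γ3, Complex.ext_iff]

theorem one_sub_hol_singular_iff_resonating_general
    (μ₀ : ℝ) (hμ₀ : 0 < μ₀) (k : ℕ)
    (lam : Fin k → ℝ)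
    (x₀ x₁ x₂ x₃ : ℝ) :
    ((1 : Matrix (Fin 2 × Fin k) (Fin 2 × Fin k) ℂ) - Hol μ₀ k lam x₀ x₁ x₂ x₃).det = 0 ↔
      x₁ = 0 ∧ x₂ = 0 ∧ x₃ = 0 ∧
        ∃ ℓ : Fin k, ∃ m : ℤ, x₀ = lam ℓ + 2 * Real.pi * m / μ₀ := by
  have hres (ℓ : Fin k) (m : ℤ) :
      μ₀ * (x₀ - lam ℓ) = 2 * Real.pi * m ↔ x₀ = lam ℓ + 2 * Real.pi * m / μ₀ := by
    rw [← sub_eq_iff_eq_add', eq_div_iff hμ₀.ne', mul_comm]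
  rw [Hol, hol_generator_eq_blockDiagonal, det_one_sub_exp_blockDiagonal,
    Finset.prod_eq_zero_iff]
  simp only [Finset.mem_univ, true_and,
    (isHermitian_hermitianSpin _ _ _).det_one_sub_exp_eq_zero_iff,
    det_hermitianSpin_eq_zero_iff, mul_eq_zero, hμ₀.ne', false_or, hres, exists_and_left,
    and_assoc]

/-- `I − Hol(x)` is singular if and only if `x` is a resonating point, i.e.
`x₁ = x₂ = x₃ = 0` and `x₀ = λ_ℓ + 2πm/μ₀` for some `ℓ ∈ {1,…,k}` and `m ∈ ℤ`. -/
theorem one_sub_hol_singular_iff_resonating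
    (μ₀ : ℝ) (hμ₀ : 0 < μ₀) (k : ℕ) (hk : 1 ≤ k)
    (lam : Fin k → ℝ) (hinj : Function.Injective lam)
    (hmem : ∀ ℓ, lam ℓ ∈ Set.Ioo 0 (2 * Real.pi / μ₀))
    (x₀ x₁ x₂ x₃ : ℝ) :
    ((1 : Matrix (Fin 2 × Fin k) (Fin 2 × Fin k) ℂ) - Hol μ₀ k lam x₀ x₁ x₂ x₃).det = 0 ↔
      x₁ = 0 ∧ x₂ = 0 ∧ x₃ = 0 ∧
        ∃ ℓ : Fin k, ∃ m : ℤ, x₀ = lam ℓ + 2 * Real.pi * m / μ₀ :=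
  one_sub_hol_singular_iff_resonating_general μ₀ hμ₀ k lam x₀ x₁ x₂ x₃

end
end

section
/- Let Q₁, Q₂, Q₃ be 2×2 complex matrices and set R_j = −(1/2)γ_j for j = 1, 2, 3. Suppose that −½Q₁ + R₂Q₃ + Q₂R₃ − R₃Q₂ − Q₃R₂ = 0, −½Q₂ + R₃Q₁ + Q₃R₁ − R₁Q₃ − Q₁R₃ = 0, and −½Q₃ + R₁Q₂ + Q₁R₂ − R₂Q₁ − Q₂R₁ = 0. Then Q₁ = Q₂ = Q₃ = 0. -/
/-!
Pair each equation with the trace form `X ↦ tr (R_b X)`. Because `[R_i, R_j] = ε_ijk R_k` and the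
trace form is ad-invariant, the numbers `m_ib = tr (R_b Q_i)` satisfy
`-½ m_ib + δ_ib (m_11 + m_22 + m_33) - m_bi = 0`, and the plain traces satisfy `-½ tr Q_i = 0`.
These force `m = 0` and `tr Q_i = 0`, and the trace form is nondegenerate on `M₂(ℂ)`, so `Q_i = 0`.
-/

open Complex Matrix

noncomputable section

/-- The residues `R_j = −(1/2)γ_j` of rank-2 Nahm data at a singularity with `k_p = 2`. -/
def R1 : Matrix (Fin 2) (Fin 2) ℂ := (-(1 / 2) : ℂ) • γ1
def R2 : Matrix (Fin 2) (Fin 2) ℂ := (-(1 / 2) : ℂ) • γ2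
def R3 : Matrix (Fin 2) (Fin 2) ℂ := (-(1 / 2) : ℂ) • γ3

section TraceForm

variable {n R : Type*} [Fintype n] [CommRing R]

theorem Matrix.trace_mul_lie (A B X : Matrix n n R) :
    trace (A * ⁅B, X⁆) = trace (⁅A, B⁆ * X) := by
  simp only [Ring.lie_def, mul_sub, sub_mul, trace_sub, ← mul_assoc]
  rw [trace_mul_cycle A X B]

theorem trace_pairings_of_nahm_eq {A B C P Q S : Matrix n n R} (c : R)
    (hAB : ⁅A, B⁆ = C) (hBC : ⁅B, C⁆ = A) (hCA : ⁅C, A⁆ = B)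
    (h : c • P + B * S + Q * C - C * Q - S * B = 0) :
    c * trace P = 0 ∧ c * trace (A * P) + trace (B * Q) + trace (C * S) = 0 ∧
      c * trace (B * P) - trace (A * Q) = 0 ∧ c * trace (C * P) - trace (A * S) = 0 := by
  have hlie : c • P + ⁅B, S⁆ - ⁅C, Q⁆ = 0 := by
    rw [← h, Ring.lie_def, Ring.lie_def]
    abel
  have pair (X : Matrix n n R) := congrArg (fun Y => trace (X * Y)) hlie
  simp only [mul_add, mul_sub, mul_smul_comm, trace_add, trace_sub, trace_smul, trace_mul_lie,
    mul_zero, trace_zero, smul_eq_mul] at pair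
  have skew (X Y : Matrix n n R) : ⁅X, Y⁆ = -⁅Y, X⁆ := (neg_sub _ _).symm
  have hA := pair A
  have hB := pair B
  have hC := pair C
  simp only [hAB, skew A C, hCA, neg_mul, trace_neg] at hA
  simp only [(Commute.refl B).lie_eq, hBC, zero_mul, trace_zero] at hB
  simp only [skew C B, hBC, (Commute.refl C).lie_eq, neg_mul, zero_mul, trace_neg, trace_zero] at hC
  exact ⟨by simpa using congrArg trace hlie, by linear_combination hA, by linear_combination hB,
    by linear_combination hC⟩

end TraceForm

section Scalars

variable {K : Type*} [Field K] [CharZero K]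

theorem pair_eq_zero_of_neg_half_mul_sub {x y : K}
    (hx : -(1 / 2) * x - y = 0) (hy : -(1 / 2) * y - x = 0) : x = 0 ∧ y = 0 := by
  constructor
  · linear_combination 2 / 3 * hx - 4 / 3 * hy
  · linear_combination -(4 / 3) * hx + 2 / 3 * hy

theorem triple_eq_zero_of_neg_half_mul_add {a b c : K} (ha : -(1 / 2) * a + b + c = 0)
    (hb : -(1 / 2) * b + c + a = 0) (hc : -(1 / 2) * c + a + b = 0) :
    a = 0 ∧ b = 0 ∧ c = 0 := by
  refine ⟨?_, ?_, ?_⟩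
  · linear_combination -(2 / 9) * ha + 4 / 9 * hb + 4 / 9 * hc
  · linear_combination 4 / 9 * ha - 2 / 9 * hb + 4 / 9 * hc
  · linear_combination 4 / 9 * ha + 4 / 9 * hb - 2 / 9 * hc

end Scalars

theorem lie_R1_R2 : ⁅R1, R2⁆ = R3 := by
  ext i j
  fin_cases i <;> fin_cases j <;> simp [R1, R2, R3, γ1, γ2, γ3, Ring.lie_def, Complex.ext_iff] <;>
    norm_num

theorem lie_R2_R3 : ⁅R2, R3⁆ = R1 := by
  ext i j
  fin_cases i <;> fin_cases j <;> simp [R1, R2, R3, γ1, γ2, γ3, Ring.lie_def, Complex.ext_iff] <;>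
    norm_num

theorem lie_R3_R1 : ⁅R3, R1⁆ = R2 := by
  ext i j
  fin_cases i <;> fin_cases j <;> simp [R1, R2, R3, γ1, γ2, γ3, Ring.lie_def, Complex.ext_iff] <;>
    norm_num

theorem eq_zero_of_trace_mul_R_eq_zero {Q : Matrix (Fin 2) (Fin 2) ℂ} (h0 : trace Q = 0)
    (h1 : trace (R1 * Q) = 0) (h2 : trace (R2 * Q) = 0) (h3 : trace (R3 * Q) = 0) : Q = 0 := by
  obtain ⟨a, b, c, d, rfl⟩ : ∃ a b c d, Q = !![a, b; c, d] := ⟨_, _, _, _, eta_fin_two Q⟩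
  simp only [R1, R2, R3, γ1, γ2, γ3, smul_mul_assoc, trace_smul, mul_fin_two, trace_fin_two_of,
    smul_eq_mul] at h0 h1 h2 h3
  obtain ⟨rfl, rfl, rfl, rfl⟩ : a = 0 ∧ b = 0 ∧ c = 0 ∧ d = 0 := by grind [I_mul_I]
  exact (eta_fin_two 0).symm

/-- Nahm's equation rules out a `t^{−1/2}` term in rank-2 Nahm data: if `Q₁, Q₂, Q₃`
satisfy the three coefficient equations then they all vanish. -/
theorem rank_two_no_half_power_term
    (Q1 Q2 Q3 : Matrix (Fin 2) (Fin 2) ℂ)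
    (h1 : -(1 / 2 : ℂ) • Q1 + R2 * Q3 + Q2 * R3 - R3 * Q2 - Q3 * R2 = 0)
    (h2 : -(1 / 2 : ℂ) • Q2 + R3 * Q1 + Q3 * R1 - R1 * Q3 - Q1 * R3 = 0)
    (h3 : -(1 / 2 : ℂ) • Q3 + R1 * Q2 + Q1 * R2 - R2 * Q1 - Q2 * R1 = 0) :
    Q1 = 0 ∧ Q2 = 0 ∧ Q3 = 0 := by
  obtain ⟨t1, d1, p12, p13⟩ := trace_pairings_of_nahm_eq _ lie_R1_R2 lie_R2_R3 lie_R3_R1 h1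
  obtain ⟨t2, d2, p23, p21⟩ := trace_pairings_of_nahm_eq _ lie_R2_R3 lie_R3_R1 lie_R1_R2 h2
  obtain ⟨t3, d3, p31, p32⟩ := trace_pairings_of_nahm_eq _ lie_R3_R1 lie_R1_R2 lie_R2_R3 h3
  obtain ⟨m11, m22, m33⟩ := triple_eq_zero_of_neg_half_mul_add d1 d2 d3
  obtain ⟨m12, m21⟩ := pair_eq_zero_of_neg_half_mul_sub p12 p21
  obtain ⟨m13, m31⟩ := pair_eq_zero_of_neg_half_mul_sub p13 p31
  obtain ⟨m23, m32⟩ := pair_eq_zero_of_neg_half_mul_sub p23 p32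
  have hc : (-(1 / 2) : ℂ) ≠ 0 := by norm_num
  exact ⟨eq_zero_of_trace_mul_R_eq_zero ((mul_eq_zero.1 t1).resolve_left hc) m11 m12 m13,
    eq_zero_of_trace_mul_R_eq_zero ((mul_eq_zero.1 t2).resolve_left hc) m21 m22 m23,
    eq_zero_of_trace_mul_R_eq_zero ((mul_eq_zero.1 t3).resolve_left hc) m31 m32 m33⟩

end
end

section
/- Weitzenböck formula in a global trivialization over ℝ⁴: let n ≥ 1, let A₀, A₁, A₂, A₃ : ℝ⁴ → Mₙ(ℂ) be smooth matrix-valued functions, and let s : ℝ⁴ → ℂ² ⊗ ℂⁿ ≅ ℂ^{2n} be smooth. Write ∂ₐ for the partial derivative in the a-th coordinate direction of ℝ⁴, set ∇ₐ s = ∂ₐ s + (I₂ ⊗ Aₐ)·s for a = 0,1,2,3, define the coupled Dirac operators D⁺s = Σ_{a=0}^{3} (γₐ ⊗ Iₙ)·∇ₐ s and D⁻s = −Σ_{a=0}^{3} (γₐ* ⊗ Iₙ)·∇ₐ s, and define the curvature F_{ab} = ∂ₐA_b − ∂_bAₐ + AₐA_b − A_bAₐ. Then D⁻(D⁺ s)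 = − Σ_{a=0}^{3} ∇ₐ(∇ₐ s) − [ γ₁ ⊗ (F₀₁ + F₂₃) + γ₂ ⊗ (F₀₂ + F₃₁) + γ₃ ⊗ (F₀₃ + F₁₂) ]·s. In particular the zeroth-order term depends only on the self-dual part of the curvature, and vanishes when the connection is anti-self-dual (F₀₁ + F₂₃ = F₀₂ + F₃₁ = F₀₃ + F₁₂ = 0). -/
open Matrix Complex Kronecker

attribute [local instance] Matrix.normedAddCommGroup Matrix.normedSpace

noncomputable section

/-- The spin matrices `γ₀, γ₁, γ₂, γ₃`. -/
def γmat : Fin 4 → Matrix (Fin 2) (Fin 2) ℂ :=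
  ![!![1, 0; 0, 1], !![I, 0; 0, -I], !![0, -1; 1, 0], !![0, I; I, 0]]

/-- Partial derivative in the `a`-th coordinate direction of `ℝ⁴`. -/
def pd {V : Type*} [NormedAddCommGroup V] [NormedSpace ℝ V]
    (a : Fin 4) (f : (Fin 4 → ℝ) → V) (x : Fin 4 → ℝ) : V :=
  fderiv ℝ f x (Pi.single a 1)

section Aux

variable {m k l₁ l₂ m₁ m₂ : Type*} [Fintype m] [Fintype k] [Fintype l₁] [Fintype l₂]
  [Fintype m₁] [Fintype m₂]
variable {V W : Type*} [NormedAddCommGroup V] [NormedSpace ℝ V]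
  [NormedAddCommGroup W] [NormedSpace ℝ W]

/-- `mulVec` as a continuous ℝ-bilinear map. -/
def mulVecL : Matrix m k ℂ →L[ℝ] (k → ℂ) →L[ℝ] (m → ℂ) :=
  LinearMap.toContinuousLinearMap
  { toFun := fun M => LinearMap.toContinuousLinearMap ((Matrix.mulVecLin M).restrictScalars ℝ)
    map_add' := by
      intro M N; ext v i
      simp [Matrix.add_mulVec]
    map_smul' := by
      intro r M; ext v i
      simp [Matrix.mulVec, dotProduct, Finset.smul_sum, smul_mul_assoc, mul_assoc] }

@[simp] lemma mulVecL_apply (M : Matrix m k ℂ) (v : k → ℂ) : mulVecL M v = M *ᵥ v := rfl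

lemma isBBM_mulVec : IsBoundedBilinearMap ℝ (fun p : Matrix m k ℂ × (k → ℂ) => p.1 *ᵥ p.2) :=
  (mulVecL (m := m) (k := k)).isBoundedBilinearMap

/-- Kronecker product with a fixed left factor, as a continuous ℝ-linear map. -/
def kronL (C : Matrix l₁ l₂ ℂ) : Matrix m₁ m₂ ℂ →L[ℝ] Matrix (l₁ × m₁) (l₂ × m₂) ℂ :=
  LinearMap.toContinuousLinearMap
  { toFun := fun B => C ⊗ₖ B
    map_add' := fun B B' => Matrix.kronecker_add C B B'
    map_smul' := by
      intro r B; ext ⟨i, j⟩ ⟨i', j'⟩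
      simp only [Matrix.kroneckerMap_apply, Matrix.smul_apply, smul_eq_mul, Complex.real_smul,
        RingHom.id_apply]
      ring }

@[simp] lemma kronL_apply (C : Matrix l₁ l₂ ℂ) (B : Matrix m₁ m₂ ℂ) : kronL C B = C ⊗ₖ B := rfl

lemma pd_add {f g : (Fin 4 → ℝ) → V} {x : Fin 4 → ℝ} (hf : DifferentiableAt ℝ f x)
    (hg : DifferentiableAt ℝ g x) (a : Fin 4) :
    pd a (fun y => f y + g y) x = pd a f x + pd a g x := by
  unfold pd
  rw [fderiv_fun_add hf hg]; rfl

lemma pd_sum {ι : Type*} (u : Finset ι) {f : ι → (Fin 4 → ℝ) → V} {x : Fin 4 → ℝ}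
    (hf : ∀ i ∈ u, DifferentiableAt ℝ (f i) x) (a : Fin 4) :
    pd a (fun y => ∑ i ∈ u, f i y) x = ∑ i ∈ u, pd a (f i) x := by
  unfold pd
  rw [fderiv_fun_sum hf]
  simp

lemma pd_clm (L : V →L[ℝ] W) {f : (Fin 4 → ℝ) → V} {x : Fin 4 → ℝ}
    (hf : DifferentiableAt ℝ f x) (a : Fin 4) :
    pd a (fun y => L (f y)) x = L (pd a f x) := by
  have h : HasFDerivAt (fun y => L (f y)) (L.comp (fderiv ℝ f x)) x :=
    L.hasFDerivAt.comp x hf.hasFDerivAt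
  unfold pd
  rw [h.fderiv]; rfl

lemma pd_mulVec {M : (Fin 4 → ℝ) → Matrix m k ℂ} {v : (Fin 4 → ℝ) → k → ℂ} {x : Fin 4 → ℝ}
    (hM : DifferentiableAt ℝ M x) (hv : DifferentiableAt ℝ v x) (a : Fin 4) :
    pd a (fun y => M y *ᵥ v y) x = pd a M x *ᵥ v x + M x *ᵥ pd a v x := by
  have h : HasFDerivAt (fun y => M y *ᵥ v y) _ x :=
    (mulVecL (m := m) (k := k)).hasFDerivAt_of_bilinear hM.hasFDerivAt hv.hasFDerivAt
  unfold pd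
  rw [h.fderiv]
  simp
  exact add_comm _ _

lemma ContDiff.mulVec' {M : (Fin 4 → ℝ) → Matrix m k ℂ} {v : (Fin 4 → ℝ) → k → ℂ}
    (hM : ContDiff ℝ (⊤ : ℕ∞) M) (hv : ContDiff ℝ (⊤ : ℕ∞) v) :
    ContDiff ℝ (⊤ : ℕ∞) (fun y => M y *ᵥ v y) :=
  ((isBBM_mulVec (m := m) (k := k)).contDiff).comp (ContDiff.prodMk hM hv)

lemma ContDiff.pd' {f : (Fin 4 → ℝ) → V} (hf : ContDiff ℝ (⊤ : ℕ∞) f) (a : Fin 4) :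
    ContDiff ℝ (⊤ : ℕ∞) (pd a f) := by
  have h1 : ContDiff ℝ (⊤ : ℕ∞) (fderiv ℝ f) := hf.fderiv_right (by simp)
  exact (ContinuousLinearMap.apply ℝ V (Pi.single a 1 : Fin 4 → ℝ)).contDiff.comp h1

lemma pd_comm {f : (Fin 4 → ℝ) → V} (hf : ContDiff ℝ (⊤ : ℕ∞) f) (a b : Fin 4) (x : Fin 4 → ℝ) :
    pd a (pd b f) x = pd b (pd a f) x := by
  have hsymm : IsSymmSndFDerivAt ℝ f x := hf.contDiffAt.isSymmSndFDerivAt (by rw [minSmoothness_of_isRCLikeNormedField]; exact WithTop.coe_le_coe.mpr le_top)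
  have h1 : ContDiff ℝ (⊤ : ℕ∞) (fderiv ℝ f) := hf.fderiv_right (by simp)
  have key : ∀ c d : Fin 4, pd c (pd d f) x
      = fderiv ℝ (fderiv ℝ f) x (Pi.single c 1) (Pi.single d 1) := by
    intro c d
    have h2 := fderiv_clm_apply (x := x) (c := fderiv ℝ f)
      (u := fun _ => (Pi.single d 1 : Fin 4 → ℝ)) (h1.differentiable (by simp) x)
      (differentiableAt_const _)
    calc pd c (pd d f) x
        = fderiv ℝ (fun y => (fderiv ℝ f y) (Pi.single d 1)) x (Pi.single c 1) := rfl
      _ = _ := by rw [h2]; simp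
  rw [key a b, key b a, hsymm.eq]

end Aux

section Kron

lemma neg_kron {l₁ l₂ m₁ m₂ : Type*} (C : Matrix l₁ l₂ ℂ) (B : Matrix m₁ m₂ ℂ) :
    (-C) ⊗ₖ B = -(C ⊗ₖ B) := by
  ext ⟨i, j⟩ ⟨i', j'⟩; simp [Matrix.kroneckerMap_apply]

lemma kron_sub {l₁ l₂ m₁ m₂ : Type*} (C : Matrix l₁ l₂ ℂ) (B B' : Matrix m₁ m₂ ℂ) :
    C ⊗ₖ (B - B') = C ⊗ₖ B - C ⊗ₖ B' := by
  ext ⟨i, j⟩ ⟨i', j'⟩; simp [Matrix.kroneckerMap_apply, mul_sub]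

end Kron


lemma gamma_sum {N : Type*} [Fintype N] [DecidableEq N] (w : Fin 4 → Fin 4 → (Fin 2 × N → ℂ)) :
    ∑ a : Fin 4, ∑ b : Fin 4, (((γmat a)ᴴ * γmat b) ⊗ₖ (1 : Matrix N N ℂ)) *ᵥ w a b =
      ∑ a : Fin 4, w a a
      + (γmat 1 ⊗ₖ (1 : Matrix N N ℂ)) *ᵥ (w 0 1 - w 1 0 + (w 2 3 - w 3 2))
      + (γmat 2 ⊗ₖ (1 : Matrix N N ℂ)) *ᵥ (w 0 2 - w 2 0 + (w 3 1 - w 1 3))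
      + (γmat 3 ⊗ₖ (1 : Matrix N N ℂ)) *ᵥ (w 0 3 - w 3 0 + (w 1 2 - w 2 1)) := by
  have e00 : (γmat 0)ᴴ * γmat 0 = 1 := by
    ext i j; fin_cases i <;> fin_cases j <;>
      simp [γmat, Matrix.mul_apply, Fin.sum_univ_two, Matrix.conjTranspose_apply]
  have e11 : (γmat 1)ᴴ * γmat 1 = 1 := by
    ext i j; fin_cases i <;> fin_cases j <;>
      simp [γmat, Matrix.mul_apply, Fin.sum_univ_two, Matrix.conjTranspose_apply]
  have e22 : (γmat 2)ᴴ * γmat 2 = 1 := by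
    ext i j; fin_cases i <;> fin_cases j <;>
      simp [γmat, Matrix.mul_apply, Fin.sum_univ_two, Matrix.conjTranspose_apply]
  have e33 : (γmat 3)ᴴ * γmat 3 = 1 := by
    ext i j; fin_cases i <;> fin_cases j <;>
      simp [γmat, Matrix.mul_apply, Fin.sum_univ_two, Matrix.conjTranspose_apply]
  have e01 : (γmat 0)ᴴ * γmat 1 = γmat 1 := by
    ext i j; fin_cases i <;> fin_cases j <;>
      simp [γmat, Matrix.mul_apply, Fin.sum_univ_two, Matrix.conjTranspose_apply]
  have e10 : (γmat 1)ᴴ * γmat 0 = -γmat 1 := by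
    ext i j; fin_cases i <;> fin_cases j <;>
      simp [γmat, Matrix.mul_apply, Fin.sum_univ_two, Matrix.conjTranspose_apply]
  have e02 : (γmat 0)ᴴ * γmat 2 = γmat 2 := by
    ext i j; fin_cases i <;> fin_cases j <;>
      simp [γmat, Matrix.mul_apply, Fin.sum_univ_two, Matrix.conjTranspose_apply]
  have e20 : (γmat 2)ᴴ * γmat 0 = -γmat 2 := by
    ext i j; fin_cases i <;> fin_cases j <;>
      simp [γmat, Matrix.mul_apply, Fin.sum_univ_two, Matrix.conjTranspose_apply]
  have e03 : (γmat 0)ᴴ * γmat 3 = γmat 3 := by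
    ext i j; fin_cases i <;> fin_cases j <;>
      simp [γmat, Matrix.mul_apply, Fin.sum_univ_two, Matrix.conjTranspose_apply]
  have e30 : (γmat 3)ᴴ * γmat 0 = -γmat 3 := by
    ext i j; fin_cases i <;> fin_cases j <;>
      simp [γmat, Matrix.mul_apply, Fin.sum_univ_two, Matrix.conjTranspose_apply]
  have e23 : (γmat 2)ᴴ * γmat 3 = γmat 1 := by
    ext i j; fin_cases i <;> fin_cases j <;>
      simp [γmat, Matrix.mul_apply, Fin.sum_univ_two, Matrix.conjTranspose_apply]
  have e32 : (γmat 3)ᴴ * γmat 2 = -γmat 1 := by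
    ext i j; fin_cases i <;> fin_cases j <;>
      simp [γmat, Matrix.mul_apply, Fin.sum_univ_two, Matrix.conjTranspose_apply]
  have e31 : (γmat 3)ᴴ * γmat 1 = γmat 2 := by
    ext i j; fin_cases i <;> fin_cases j <;>
      simp [γmat, Matrix.mul_apply, Fin.sum_univ_two, Matrix.conjTranspose_apply]
  have e13 : (γmat 1)ᴴ * γmat 3 = -γmat 2 := by
    ext i j; fin_cases i <;> fin_cases j <;>
      simp [γmat, Matrix.mul_apply, Fin.sum_univ_two, Matrix.conjTranspose_apply]
  have e12 : (γmat 1)ᴴ * γmat 2 = γmat 3 := by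
    ext i j; fin_cases i <;> fin_cases j <;>
      simp [γmat, Matrix.mul_apply, Fin.sum_univ_two, Matrix.conjTranspose_apply]
  have e21 : (γmat 2)ᴴ * γmat 1 = -γmat 3 := by
    ext i j; fin_cases i <;> fin_cases j <;>
      simp [γmat, Matrix.mul_apply, Fin.sum_univ_two, Matrix.conjTranspose_apply]
  rw [Fin.sum_univ_four, Fin.sum_univ_four, Fin.sum_univ_four, Fin.sum_univ_four,
    Fin.sum_univ_four, Fin.sum_univ_four, e00, e01, e02, e03, e10, e11, e12, e13,
    e20, e21, e22, e23, e30, e31, e32, e33]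
  simp only [neg_kron, Matrix.neg_mulVec, Matrix.one_kronecker_one, Matrix.one_mulVec,
    Matrix.mulVec_add, Matrix.mulVec_sub]
  abel

/-- The covariant derivative `∇ₐ s = ∂ₐ s + (I₂ ⊗ Aₐ)·s` on `ℂ² ⊗ ℂⁿ`-valued functions. -/
def covDeriv (n : ℕ) (A : Fin 4 → (Fin 4 → ℝ) → Matrix (Fin n) (Fin n) ℂ) (a : Fin 4)
    (s : (Fin 4 → ℝ) → (Fin 2 × Fin n → ℂ)) (x : Fin 4 → ℝ) : Fin 2 × Fin n → ℂ :=
  pd a s x + ((1 : Matrix (Fin 2) (Fin 2) ℂ) ⊗ₖ A a x).mulVec (s x)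

/-- The coupled Dirac operator `D⁺s = Σₐ (γₐ ⊗ Iₙ)·∇ₐ s`. -/
def Dplus (n : ℕ) (A : Fin 4 → (Fin 4 → ℝ) → Matrix (Fin n) (Fin n) ℂ)
    (s : (Fin 4 → ℝ) → (Fin 2 × Fin n → ℂ)) (x : Fin 4 → ℝ) : Fin 2 × Fin n → ℂ :=
  ∑ a : Fin 4, (γmat a ⊗ₖ (1 : Matrix (Fin n) (Fin n) ℂ)).mulVec (covDeriv n A a s x)

/-- The coupled Dirac operator `D⁻s = −Σₐ (γₐ* ⊗ Iₙ)·∇ₐ s`. -/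
def Dminus (n : ℕ) (A : Fin 4 → (Fin 4 → ℝ) → Matrix (Fin n) (Fin n) ℂ)
    (s : (Fin 4 → ℝ) → (Fin 2 × Fin n → ℂ)) (x : Fin 4 → ℝ) : Fin 2 × Fin n → ℂ :=
  -∑ a : Fin 4, ((γmat a)ᴴ ⊗ₖ (1 : Matrix (Fin n) (Fin n) ℂ)).mulVec (covDeriv n A a s x)

/-- The curvature `F_{ab} = ∂ₐA_b − ∂_bAₐ + AₐA_b − A_bAₐ`. -/
def curv (n : ℕ) (A : Fin 4 → (Fin 4 → ℝ) → Matrix (Fin n) (Fin n) ℂ) (a b : Fin 4)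
    (x : Fin 4 → ℝ) : Matrix (Fin n) (Fin n) ℂ :=
  pd a (A b) x - pd b (A a) x + A a x * A b x - A b x * A a x

section Main

variable {n : ℕ} {A : Fin 4 → (Fin 4 → ℝ) → Matrix (Fin n) (Fin n) ℂ}
  {s : (Fin 4 → ℝ) → (Fin 2 × Fin n → ℂ)}

lemma contDiff_covDeriv (hA : ∀ a, ContDiff ℝ (⊤ : ℕ∞) (A a)) (hs : ContDiff ℝ (⊤ : ℕ∞) s) (b : Fin 4) :
    ContDiff ℝ (⊤ : ℕ∞) (fun y => covDeriv n A b s y) := by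
  have h1 : ContDiff ℝ (⊤ : ℕ∞) (pd b s) := hs.pd' b
  have h2 : ContDiff ℝ (⊤ : ℕ∞) (fun y => ((1 : Matrix (Fin 2) (Fin 2) ℂ) ⊗ₖ A b y)) :=
    (kronL (m₁ := Fin n) (m₂ := Fin n) (1 : Matrix (Fin 2) (Fin 2) ℂ)).contDiff.comp (hA b)
  exact h1.add (h2.mulVec' hs)

lemma covDeriv_covDeriv_expand (hA : ∀ a, ContDiff ℝ (⊤ : ℕ∞) (A a)) (hs : ContDiff ℝ (⊤ : ℕ∞) s)
    (a b : Fin 4) (x : Fin 4 → ℝ) :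
    covDeriv n A a (fun y => covDeriv n A b s y) x
      = pd a (pd b s) x
        + ((1 : Matrix (Fin 2) (Fin 2) ℂ) ⊗ₖ pd a (A b) x) *ᵥ s x
        + ((1 : Matrix (Fin 2) (Fin 2) ℂ) ⊗ₖ A b x) *ᵥ pd a s x
        + ((1 : Matrix (Fin 2) (Fin 2) ℂ) ⊗ₖ A a x) *ᵥ pd b s x
        + ((1 : Matrix (Fin 2) (Fin 2) ℂ) ⊗ₖ (A a x * A b x)) *ᵥ s x := by
  have hM : DifferentiableAt ℝ (fun y => ((1 : Matrix (Fin 2) (Fin 2) ℂ) ⊗ₖ A b y)) x :=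
    (((kronL (m₁ := Fin n) (m₂ := Fin n) (1 : Matrix (Fin 2) (Fin 2) ℂ)).contDiff.comp (hA b)).differentiable (by simp)) x
  have hds : DifferentiableAt ℝ s x := (hs.differentiable (by simp)) x
  have hpdbs : DifferentiableAt ℝ (pd b s) x := ((hs.pd' b).differentiable (by simp)) x
  have hmv : DifferentiableAt ℝ (fun y => ((1 : Matrix (Fin 2) (Fin 2) ℂ) ⊗ₖ A b y) *ᵥ s y) x := by
    have := (((kronL (m₁ := Fin n) (m₂ := Fin n) (1 : Matrix (Fin 2) (Fin 2) ℂ)).contDiff.comp (hA b)).mulVec' hs)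
    exact (this.differentiable (by simp)) x
  have step1 : pd a (fun y => covDeriv n A b s y) x
      = pd a (pd b s) x + pd a (fun y => ((1 : Matrix (Fin 2) (Fin 2) ℂ) ⊗ₖ A b y) *ᵥ s y) x :=
    pd_add hpdbs hmv a
  have step2 : pd a (fun y => ((1 : Matrix (Fin 2) (Fin 2) ℂ) ⊗ₖ A b y) *ᵥ s y) x
      = pd a (fun y => ((1 : Matrix (Fin 2) (Fin 2) ℂ) ⊗ₖ A b y)) x *ᵥ s x
        + ((1 : Matrix (Fin 2) (Fin 2) ℂ) ⊗ₖ A b x) *ᵥ pd a s x :=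
    pd_mulVec hM hds a
  have step3 : pd a (fun y => ((1 : Matrix (Fin 2) (Fin 2) ℂ) ⊗ₖ A b y)) x
      = (1 : Matrix (Fin 2) (Fin 2) ℂ) ⊗ₖ pd a (A b) x :=
    pd_clm (kronL (1 : Matrix (Fin 2) (Fin 2) ℂ)) (((hA b).differentiable (by simp)) x) a
  have step4 : ((1 : Matrix (Fin 2) (Fin 2) ℂ) ⊗ₖ A a x) *ᵥ covDeriv n A b s x
      = ((1 : Matrix (Fin 2) (Fin 2) ℂ) ⊗ₖ A a x) *ᵥ pd b s x
        + ((1 : Matrix (Fin 2) (Fin 2) ℂ) ⊗ₖ (A a x * A b x)) *ᵥ s x := by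
    show ((1 : Matrix (Fin 2) (Fin 2) ℂ) ⊗ₖ A a x) *ᵥ
        (pd b s x + ((1 : Matrix (Fin 2) (Fin 2) ℂ) ⊗ₖ A b x) *ᵥ s x) = _
    rw [Matrix.mulVec_add, Matrix.mulVec_mulVec, ← Matrix.mul_kronecker_mul, one_mul]
  show pd a (fun y => covDeriv n A b s y) x
      + ((1 : Matrix (Fin 2) (Fin 2) ℂ) ⊗ₖ A a x) *ᵥ covDeriv n A b s x = _
  rw [step1, step2, step3, step4]
  abel

lemma covDeriv_comm (hA : ∀ a, ContDiff ℝ (⊤ : ℕ∞) (A a)) (hs : ContDiff ℝ (⊤ : ℕ∞) s)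
    (a b : Fin 4) (x : Fin 4 → ℝ) :
    covDeriv n A a (fun y => covDeriv n A b s y) x
      - covDeriv n A b (fun y => covDeriv n A a s y) x
      = ((1 : Matrix (Fin 2) (Fin 2) ℂ) ⊗ₖ curv n A a b x) *ᵥ s x := by
  rw [covDeriv_covDeriv_expand hA hs a b x, covDeriv_covDeriv_expand hA hs b a x,
    pd_comm hs a b x]
  unfold curv
  simp only [kron_sub, Matrix.kronecker_add, Matrix.sub_mulVec, Matrix.add_mulVec]
  abel

end Main


/-- Weitzenböck formula in a global trivialisation over `ℝ⁴`:
`D⁻D⁺s = −Σₐ ∇ₐ∇ₐ s − [γ₁⊗(F₀₁+F₂₃) + γ₂⊗(F₀₂+F₃₁) + γ₃⊗(F₀₃+F₁₂)]·s`;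
in particular the zeroth-order term depends only on the self-dual part of the curvature. -/
theorem weitzenbock_formula (n : ℕ) (hn : 1 ≤ n)
    (A : Fin 4 → (Fin 4 → ℝ) → Matrix (Fin n) (Fin n) ℂ)
    (s : (Fin 4 → ℝ) → (Fin 2 × Fin n → ℂ))
    (hA : ∀ a, ContDiff ℝ (⊤ : ℕ∞) (A a)) (hs : ContDiff ℝ (⊤ : ℕ∞) s) (x : Fin 4 → ℝ) :
    Dminus n A (fun y => Dplus n A s y) x =
      -(∑ a : Fin 4, covDeriv n A a (fun y => covDeriv n A a s y) x) -
        (γmat 1 ⊗ₖ (curv n A 0 1 x + curv n A 2 3 x) +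
          γmat 2 ⊗ₖ (curv n A 0 2 x + curv n A 3 1 x) +
          γmat 3 ⊗ₖ (curv n A 0 3 x + curv n A 1 2 x)).mulVec (s x) := by
  have hcov : ∀ b, ContDiff ℝ (⊤ : ℕ∞) (fun y => covDeriv n A b s y) := contDiff_covDeriv hA hs
  have key : ∀ a : Fin 4, covDeriv n A a (fun y => Dplus n A s y) x
      = ∑ b : Fin 4, (γmat b ⊗ₖ (1 : Matrix (Fin n) (Fin n) ℂ)) *ᵥ
          covDeriv n A a (fun y => covDeriv n A b s y) x := by
    intro a
    have h1 : pd a (fun y => Dplus n A s y) x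
        = ∑ b : Fin 4, (γmat b ⊗ₖ (1 : Matrix (Fin n) (Fin n) ℂ)) *ᵥ
            pd a (fun y => covDeriv n A b s y) x := by
      have hdiff : ∀ b ∈ (Finset.univ : Finset (Fin 4)),
          DifferentiableAt ℝ
            (fun y => (γmat b ⊗ₖ (1 : Matrix (Fin n) (Fin n) ℂ)) *ᵥ covDeriv n A b s y) x :=
        fun b _ => ((ContDiff.mulVec' contDiff_const (hcov b)).differentiable (by simp)) x
      have h2 := pd_sum Finset.univ hdiff a
      rw [show (fun y => Dplus n A s y) = (fun y => ∑ b : Fin 4,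
        (γmat b ⊗ₖ (1 : Matrix (Fin n) (Fin n) ℂ)) *ᵥ covDeriv n A b s y) from rfl, h2]
      exact Finset.sum_congr rfl fun b _ =>
        pd_clm (mulVecL (γmat b ⊗ₖ (1 : Matrix (Fin n) (Fin n) ℂ)))
          (((hcov b).differentiable (by simp)) x) a
    have h3 : ((1 : Matrix (Fin 2) (Fin 2) ℂ) ⊗ₖ A a x) *ᵥ Dplus n A s x
        = ∑ b : Fin 4, (γmat b ⊗ₖ (1 : Matrix (Fin n) (Fin n) ℂ)) *ᵥ
            (((1 : Matrix (Fin 2) (Fin 2) ℂ) ⊗ₖ A a x) *ᵥ covDeriv n A b s x) := by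
      show mulVecL ((1 : Matrix (Fin 2) (Fin 2) ℂ) ⊗ₖ A a x)
        (∑ b : Fin 4, (γmat b ⊗ₖ (1 : Matrix (Fin n) (Fin n) ℂ)) *ᵥ covDeriv n A b s x) = _
      rw [map_sum]
      refine Finset.sum_congr rfl fun b _ => ?_
      show ((1 : Matrix (Fin 2) (Fin 2) ℂ) ⊗ₖ A a x) *ᵥ
        ((γmat b ⊗ₖ (1 : Matrix (Fin n) (Fin n) ℂ)) *ᵥ covDeriv n A b s x) = _
      rw [Matrix.mulVec_mulVec, Matrix.mulVec_mulVec, ← Matrix.mul_kronecker_mul,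
        ← Matrix.mul_kronecker_mul, one_mul, mul_one, mul_one, one_mul]
    show pd a (fun y => Dplus n A s y) x
        + ((1 : Matrix (Fin 2) (Fin 2) ℂ) ⊗ₖ A a x) *ᵥ Dplus n A s x = _
    rw [h1, h3, ← Finset.sum_add_distrib]
    refine Finset.sum_congr rfl fun b _ => ?_
    rw [← Matrix.mulVec_add]
    rfl
  have main : Dminus n A (fun y => Dplus n A s y) x
      = -∑ a : Fin 4, ∑ b : Fin 4,
          (((γmat a)ᴴ * γmat b) ⊗ₖ (1 : Matrix (Fin n) (Fin n) ℂ)) *ᵥ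
            covDeriv n A a (fun y => covDeriv n A b s y) x := by
    show -∑ a : Fin 4, ((γmat a)ᴴ ⊗ₖ (1 : Matrix (Fin n) (Fin n) ℂ)) *ᵥ
        covDeriv n A a (fun y => Dplus n A s y) x = _
    congr 1
    refine Finset.sum_congr rfl fun a _ => ?_
    rw [key a]
    show mulVecL ((γmat a)ᴴ ⊗ₖ (1 : Matrix (Fin n) (Fin n) ℂ)) (∑ b : Fin 4, _) = _
    rw [map_sum]
    refine Finset.sum_congr rfl fun b _ => ?_
    show ((γmat a)ᴴ ⊗ₖ (1 : Matrix (Fin n) (Fin n) ℂ)) *ᵥ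
      ((γmat b ⊗ₖ (1 : Matrix (Fin n) (Fin n) ℂ)) *ᵥ _) = _
    rw [Matrix.mulVec_mulVec, ← Matrix.mul_kronecker_mul, one_mul]
  rw [main, gamma_sum (fun a b => covDeriv n A a (fun y => covDeriv n A b s y) x),
    covDeriv_comm hA hs 0 1 x, covDeriv_comm hA hs 2 3 x, covDeriv_comm hA hs 0 2 x,
    covDeriv_comm hA hs 3 1 x, covDeriv_comm hA hs 0 3 x, covDeriv_comm hA hs 1 2 x]
  simp only [Matrix.mulVec_add, Matrix.mulVec_mulVec, ← Matrix.mul_kronecker_mul,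
    one_mul, mul_one, Matrix.kronecker_add, Matrix.add_mulVec]
  abel

end
end
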